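/- Let G be a P_5-free graph and let A and B be disjoint, anticomplete vertex sets of G such that both G[A] and G[B] are connected. If a vertex v ∉ A ∪ B has at least one neighbour in A and at least one neighbour in B, then v is adjacent to every vertex of A or v is adjacent to every vertex of B. -/
import Mathlib


/-- Two vertex sets are anticomplete if no vertex of one is adjacent to a vertex of
the other. -/
def SimpleGraph.Anticomplete {V : Type*} (G : SimpleGraph V) (A B : Set V) : Prop :=
  ∀ a ∈ A, ∀ b ∈ B, ¬ G.Adj a b

lemma boundary_edge {V : Type*} (G : SimpleGraph V) (A : Set V)
    (hA : (G.induce A).Connected) (P : V → Prop) {a a' : V} (ha : a ∈ A) (ha' : a' ∈ A)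
    (hPa : P a) (hPa' : ¬ P a') :
    ∃ u ∈ A, ∃ w ∈ A, G.Adj u w ∧ P u ∧ ¬ P w := by
  have key : ∀ (x y : A), (G.induce A).Walk x y → P x → ¬ P y →
      ∃ u ∈ A, ∃ w ∈ A, G.Adj u w ∧ P u ∧ ¬ P w := by
    intro x y w
    induction w with
    | nil => intro h1 h2; exact absurd h1 h2
    | @cons x z y h p ih =>
      intro h1 h2
      by_cases hPz : P z.1
      · exact ih hPz h2
      · exact ⟨x.1, x.2, z.1, z.2, by simpa using h, h1, hPz⟩
  obtain ⟨w⟩ := (hA ⟨a, ha⟩ ⟨a', ha'⟩)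
  exact key _ _ w hPa hPa'

/-- in a `P₅`-free graph, if `A` and `B` are disjoint anticomplete connected
sets and a vertex `v ∉ A ∪ B` has a neighbour in each of them, then `v` is complete to
`A` or complete to `B`. -/
theorem p5free_dominating_side {V : Type*} (G : SimpleGraph V)
    (hfree : ¬ Nonempty (SimpleGraph.pathGraph 5 ↪g G))
    (A B : Set V) (hdisj : Disjoint A B) (hanti : G.Anticomplete A B)
    (hA : (G.induce A).Connected) (hB : (G.induce B).Connected)
    (v : V) (hv : v ∉ A ∪ B)
    (hvA : ∃ a ∈ A, G.Adj v a) (hvB : ∃ b ∈ B, G.Adj v b) :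
    (∀ a ∈ A, G.Adj v a) ∨ (∀ b ∈ B, G.Adj v b) := by
  by_contra hcon
  push_neg at hcon
  obtain ⟨⟨a', ha', hva'⟩, ⟨b', hb', hvb'⟩⟩ := hcon
  obtain ⟨a, ha, hva⟩ := hvA
  obtain ⟨b, hb, hvb⟩ := hvB
  obtain ⟨a1, ha1, a2, ha2, ha12, hva1, hva2⟩ :=
    boundary_edge G A hA (fun u => G.Adj v u) ha ha' hva hva'
  obtain ⟨b1, hb1, b2, hb2, hb12, hvb1, hvb2⟩ :=
    boundary_edge G B hB (fun u => G.Adj v u) hb hb' hvb hvb'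
  have hvA' : v ∉ A := fun h => hv (Or.inl h)
  have hvB' : v ∉ B := fun h => hv (Or.inr h)
  have hAB : ∀ x ∈ A, ∀ y ∈ B, x ≠ y := fun x hx y hy hxy =>
    hdisj.ne_of_mem hx hy hxy
  have nadj : ∀ x ∈ A, ∀ y ∈ B, ¬ G.Adj x y := hanti
  have e1 : a2 ≠ a1 := fun h => G.ne_of_adj ha12 h.symm
  have e2 : b1 ≠ b2 := G.ne_of_adj hb12
  set f : Fin 5 → V := ![a2, a1, v, b1, b2] with hf
  have hinj : Function.Injective f := by
    intro i j hij
    fin_cases i <;> fin_cases j <;>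
      first
      | rfl
      | (exfalso
         simp [hf] at hij
         first
         | exact e1 hij
         | exact e1 hij.symm
         | exact e2 hij
         | exact e2 hij.symm
         | exact hvA' (hij ▸ ha2)
         | exact hvA' (hij ▸ ha1)
         | exact hvB' (hij ▸ hb1)
         | exact hvB' (hij ▸ hb2)
         | exact hvA' (hij.symm ▸ ha2)
         | exact hvA' (hij.symm ▸ ha1)
         | exact hvB' (hij.symm ▸ hb1)
         | exact hvB' (hij.symm ▸ hb2)
         | exact hAB _ ha2 _ hb1 hij
         | exact hAB _ ha2 _ hb2 hij
         | exact hAB _ ha1 _ hb1 hij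
         | exact hAB _ ha1 _ hb2 hij
         | exact hAB _ ha2 _ hb1 hij.symm
         | exact hAB _ ha2 _ hb2 hij.symm
         | exact hAB _ ha1 _ hb1 hij.symm
         | exact hAB _ ha1 _ hb2 hij.symm)
  refine hfree ⟨⟨⟨f, hinj⟩, ?_⟩⟩
  intro i j
  fin_cases i <;> fin_cases j <;>
    simp only [hf, Function.Embedding.coeFn_mk] <;>
    simp [SimpleGraph.pathGraph_adj] <;>
    first
    | exact ha12.symm
    | exact ha12
    | exact hva1
    | exact hva1.symm
    | exact hvb1
    | exact hvb1.symm
    | exact hb12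
    | exact hb12.symm
    | exact fun h => hva2 h.symm
    | exact hva2
    | exact hvb2
    | exact fun h => hvb2 h.symm
    | exact nadj _ ha2 _ hb1
    | exact nadj _ ha2 _ hb2
    | exact nadj _ ha1 _ hb1
    | exact nadj _ ha1 _ hb2
    | exact fun h => nadj _ ha2 _ hb1 h.symm
    | exact fun h => nadj _ ha2 _ hb2 h.symm
    | exact fun h => nadj _ ha1 _ hb1 h.symm
    | exact fun h => nadj _ ha1 _ hb2 h.symm
    | exact iff_of_true ha12.symm (by decide)
    | exact iff_of_true ha12 (by decide)
    | exact iff_of_true hva1 (by decide)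
    | exact iff_of_true hva1.symm (by decide)
    | exact iff_of_true hvb1 (by decide)
    | exact iff_of_true hvb1.symm (by decide)
    | exact iff_of_true hb12 (by decide)
    | exact iff_of_true hb12.symm (by decide)
    | exact iff_of_false (fun h => hva2 h.symm) (by decide)
    | exact iff_of_false hva2 (by decide)
    | exact iff_of_false hvb2 (by decide)
    | exact iff_of_false (fun h => hvb2 h.symm) (by decide)
    | exact iff_of_false (nadj _ ha2 _ hb1) (by decide)
    | exact iff_of_false (nadj _ ha2 _ hb2) (by decide)
    | exact iff_of_false (nadj _ ha1 _ hb1) (by decide)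
    | exact iff_of_false (nadj _ ha1 _ hb2) (by decide)
    | exact iff_of_false (fun h => nadj _ ha2 _ hb1 h.symm) (by decide)
    | exact iff_of_false (fun h => nadj _ ha2 _ hb2 h.symm) (by decide)
    | exact iff_of_false (fun h => nadj _ ha1 _ hb1 h.symm) (by decide)
    | exact iff_of_false (fun h => nadj _ ha1 _ hb2 h.symm) (by decide)
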